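/- Two-threshold lemma: Let F be the multilinear extension of a submodular function f : 2^X → ℝ₊, let X = X₁ ∪ X₂ be a partition, and let λ₁, λ₂ be independent uniform random variables in [0,1]. Then for any x ∈ [0,1]^X, F(x) ≥ E[f((T_{>λ₁}(x) ∩ X₁) ∪ (T_{>λ₂}(x) ∩ X₂))], where T_{>λ}(x) = {i : x_i > λ}. -/

import Mathlib

open MeasureTheory

def Submodular {X : Type*} [DecidableEq X] (f : Finset X → ℝ) : Prop :=
  ∀ S T : Finset X, f (S ∪ T) + f (S ∩ T) ≤ f S + f T

/-- The multilinear extension of a set function. -/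
def mExt {X : Type*} [Fintype X] [DecidableEq X] (f : Finset X → ℝ) (x : X → ℝ) : ℝ :=
  ∑ S : Finset X, f S * ((∏ i ∈ S, x i) * ∏ j ∈ Sᶜ, (1 - x j))

/-!
Fixing `t₁`, the inner integral is the expectation of threshold-rounding (with one uniform
threshold) the `X₂`-coordinates of the point obtained from `x` by rounding its `X₁`-coordinates
at `t₁`. So it suffices to prove the one-threshold inequality `E_t F(round_Y(t, x)) ≤ F(x)` for an
arbitrary block `Y` of coordinates, and to apply it twice.

The one-threshold inequality is proved by making the coordinates of `Y` integral one at a time.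
For `a ∈ Y` and `s = x a`, `F(round(t, x)) = F(round(t, x)[a := 0]) + 1[t < s] · ∂ₐF(round(t, x))`.
Submodularity makes `∂ₐF` antitone on the cube and `round(t, x)` decreases in `t`, so
`t ↦ ∂ₐF(round(t, x))` is monotone, and Chebyshev's integral inequality bounds the expectation of
the second term by `s` times that of `∂ₐF(round(t, x))`. What remains is
`(1 - s) E F(round(t, x[a := 0])) + s E F(round(t, x[a := 1]))`, which by induction and
multilinearity is at most `(1 - s) F(x[a := 0]) + s F(x[a := 1]) = F(x)`.
-/

section TwoThreshold

open Finset Function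

variable {X : Type*} [DecidableEq X]

def mExtOn (f : Finset X → ℝ) (E : Finset X) (x : X → ℝ) : ℝ :=
  ∑ S ∈ E.powerset, f S * ((∏ i ∈ S, x i) * ∏ j ∈ E \ S, (1 - x j))

section mExtOn

variable {f g : Finset X → ℝ} {E : Finset X} {x y : X → ℝ}

theorem mExt_eq_mExtOn_univ [Fintype X] (f : Finset X → ℝ) (x : X → ℝ) :
    mExt f x = mExtOn f univ x := by
  simp [mExt, mExtOn, compl_eq_univ_sdiff]

theorem mExtOn_insert (f : Finset X → ℝ) {a : X} (ha : a ∉ E) (x : X → ℝ) :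
    mExtOn f (insert a E) x
      = (1 - x a) * mExtOn f E x + x a * mExtOn (fun S => f (insert a S)) E x := by
  rw [mExtOn, sum_powerset_insert ha, mExtOn, mExtOn, mul_sum, mul_sum]
  congr 1 <;> refine sum_congr rfl fun S hS => ?_
  · have haS : a ∉ S := fun h => ha (mem_powerset.1 hS h)
    rw [insert_sdiff_of_notMem _ haS, prod_insert (fun h => ha (mem_sdiff.1 h).1)]
    ring
  · have haS : a ∉ S := fun h => ha (mem_powerset.1 hS h)
    rw [prod_insert haS, insert_sdiff_insert, sdiff_insert_of_notMem ha]
    ring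

theorem mExtOn_congr (f : Finset X → ℝ) (h : ∀ i ∈ E, x i = y i) :
    mExtOn f E x = mExtOn f E y := by
  refine sum_congr rfl fun S hS => ?_
  have hSE := mem_powerset.1 hS
  rw [prod_congr rfl fun i hi => h i (hSE hi),
    prod_congr rfl fun j hj => congrArg (1 - ·) (h j (mem_sdiff.1 hj).1)]

theorem mExtOn_sub (f g : Finset X → ℝ) (E : Finset X) (x : X → ℝ) :
    mExtOn (f - g) E x = mExtOn f E x - mExtOn g E x := by
  simp only [mExtOn, Pi.sub_apply, sub_mul, sum_sub_distrib]

theorem mExtOn_le_mExtOn (hx : ∀ i, x i ∈ Set.Icc (0 : ℝ) 1) (hfg : ∀ S ⊆ E, f S ≤ g S) :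
    mExtOn f E x ≤ mExtOn g E x := by
  refine sum_le_sum fun S hS => mul_le_mul_of_nonneg_right (hfg S (mem_powerset.1 hS)) ?_
  exact mul_nonneg (prod_nonneg fun i _ => (hx i).1)
    (prod_nonneg fun j _ => sub_nonneg.2 (hx j).2)

theorem mExtOn_antitone (hg : ∀ S T, S ⊆ T → T ⊆ E → g T ≤ g S)
    (hx : ∀ i, x i ∈ Set.Icc (0 : ℝ) 1) (hy : ∀ i, y i ∈ Set.Icc (0 : ℝ) 1) (hxy : x ≤ y) :
    mExtOn g E y ≤ mExtOn g E x := by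
  induction E using Finset.induction_on generalizing g with
  | empty => simp [mExtOn]
  | @insert b E hb ih =>
    rw [mExtOn_insert g hb, mExtOn_insert g hb]
    have hA := ih fun S T hST hTE => hg S T hST (hTE.trans (subset_insert b E))
    have hB := ih (g := fun S => g (insert b S)) fun S T hST hTE =>
      hg _ _ (insert_subset_insert b hST) (insert_subset_insert b hTE)
    have hBA : mExtOn (fun S => g (insert b S)) E x ≤ mExtOn g E x :=
      mExtOn_le_mExtOn hx fun S hS =>
        hg S (insert b S) (subset_insert b S) (insert_subset_insert b hS)
    have hxb := hxy b
    nlinarith [(hx b).1, (hy b).2]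

end mExtOn

section mExt

variable [Fintype X] {f : Finset X → ℝ} {x y : X → ℝ}

theorem mExt_update (f : Finset X → ℝ) (x : X → ℝ) (a : X) (c : ℝ) :
    mExt f (update x a c) = (1 - c) * mExtOn f (univ.erase a) x
      + c * mExtOn (fun S => f (insert a S)) (univ.erase a) x := by
  have hx : ∀ i ∈ univ.erase a, update x a c i = x i := fun i hi =>
    update_of_ne (ne_of_mem_erase hi) c x
  conv_lhs => rw [mExt_eq_mExtOn_univ, ← insert_erase (mem_univ a)]
  rw [mExtOn_insert _ (notMem_erase a _), update_self, mExtOn_congr _ hx, mExtOn_congr _ hx]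

theorem mExt_update_affine (f : Finset X → ℝ) (x : X → ℝ) (a : X) (c : ℝ) :
    mExt f (update x a c) = (1 - c) * mExt f (update x a 0) + c * mExt f (update x a 1) := by
  rw [mExt_update, mExt_update, mExt_update]
  ring

theorem mExt_eq_affine (f : Finset X → ℝ) (x : X → ℝ) (a : X) :
    mExt f x = (1 - x a) * mExt f (update x a 0) + x a * mExt f (update x a 1) := by
  rw [← mExt_update_affine, update_eq_self]

theorem mExt_update_one_sub_update_zero (f : Finset X → ℝ) (x : X → ℝ) (a : X) :
    mExt f (update x a 1) - mExt f (update x a 0)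
      = mExtOn (fun S => f (insert a S) - f S) (univ.erase a) x := by
  rw [mExt_update, mExt_update, ← Pi.sub_def, mExtOn_sub]
  ring

theorem Submodular.mExt_marginal_antitone (hf : Submodular f) (a : X)
    (hx : ∀ i, x i ∈ Set.Icc (0 : ℝ) 1) (hy : ∀ i, y i ∈ Set.Icc (0 : ℝ) 1) (hxy : x ≤ y) :
    mExt f (update y a 1) - mExt f (update y a 0)
      ≤ mExt f (update x a 1) - mExt f (update x a 0) := by
  rw [mExt_update_one_sub_update_zero, mExt_update_one_sub_update_zero]
  refine mExtOn_antitone (fun S T hST hT => ?_) hx hy hxy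
  have haT : a ∉ T := fun h => notMem_erase a univ (hT h)
  have h := hf (insert a S) T
  rw [insert_union, union_eq_right.2 hST, insert_inter_of_notMem haT,
    inter_eq_left.2 hST] at h
  linarith

theorem mExt_indicator (f : Finset X → ℝ) (A : Finset X) :
    mExt f (fun i => if i ∈ A then 1 else 0) = f A := by
  rw [mExt, sum_eq_single A]
  · rw [prod_eq_one fun i hi => if_pos hi, prod_eq_one fun j hj => by simp [mem_compl.1 hj]]
    ring
  · intro S _ hSA
    obtain ⟨i, hi⟩ := symmDiff_nonempty.2 hSA
    rcases mem_symmDiff.1 hi with ⟨hiS, hiA⟩ | ⟨hiA, hiS⟩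
    · rw [prod_eq_zero hiS (if_neg hiA), zero_mul, mul_zero]
    · rw [prod_eq_zero (mem_compl.2 hiS) (by simp [hiA]), mul_zero, mul_zero]
  · simp

theorem continuous_mExt (f : Finset X → ℝ) : Continuous (mExt f) := by
  unfold mExt
  fun_prop

theorem integrable_mExt_comp {α : Type*} [MeasurableSpace α] {μ : Measure α} [IsFiniteMeasure μ]
    (f : Finset X → ℝ) {v : α → X → ℝ} (hv : Measurable v)
    (h01 : ∀ t i, v t i ∈ Set.Icc (0 : ℝ) 1) :
    Integrable (fun t => mExt f (v t)) μ := by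
  obtain ⟨C, hC⟩ := (isCompact_univ_pi fun _ : X => isCompact_Icc).exists_bound_of_continuousOn
    (continuous_mExt f).continuousOn
  exact .of_bound ((continuous_mExt f).measurable.comp hv).aestronglyMeasurable C
    (.of_forall fun t => hC _ fun i _ => h01 t i)

end mExt

open Set in
/-- Chebyshev's integral inequality for `1_{[0, s)}` and a monotone function on `[0, 1)`. -/
theorem Monotone.setIntegral_indicator_Iio_le {m : ℝ → ℝ} (hm : Monotone m) {s : ℝ}
    (hs : s ∈ Icc (0 : ℝ) 1) :
    ∫ t in Ico 0 1, (Iio s).indicator m t ≤ s * ∫ t in Ico 0 1, m t := by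
  have hint : IntegrableOn m (Ico 0 1) :=
    ((hm.monotoneOn _).integrableOn_isCompact isCompact_Icc).mono_set Ico_subset_Icc_self
  rw [setIntegral_indicator measurableSet_Iio, Ico_inter_Iio, min_eq_right hs.2,
    ← Ico_union_Ico_eq_Ico hs.1 hs.2, setIntegral_union Ico_disjoint_Ico_same measurableSet_Ico
      (hint.mono_set (Ico_subset_Ico_right hs.2)) (hint.mono_set (Ico_subset_Ico_left hs.1))]
  have hlow : ∫ t in Ico 0 s, m t ≤ s * m s := by
    have h := setIntegral_mono_on (hint.mono_set (Ico_subset_Ico_right hs.2))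
      (integrableOn_const measure_Ico_lt_top.ne) measurableSet_Ico fun t ht => hm ht.2.le
    rwa [setIntegral_const, Real.volume_real_Ico_of_le hs.1, smul_eq_mul, sub_zero] at h
  have hup : (1 - s) * m s ≤ ∫ t in Ico s 1, m t := by
    have h := setIntegral_mono_on (integrableOn_const measure_Ico_lt_top.ne)
      (hint.mono_set (Ico_subset_Ico_left hs.1)) measurableSet_Ico fun t ht => hm ht.1
    rwa [setIntegral_const, Real.volume_real_Ico_of_le hs.2, smul_eq_mul] at h
  nlinarith [mul_le_mul_of_nonneg_left hlow (sub_nonneg.2 hs.2),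
    mul_le_mul_of_nonneg_left hup hs.1]

/-- On `Y`, `x` is replaced by the indicator of the superlevel set `T_{>t}(x) = {i | t < x i}`. -/
noncomputable def roundOn (Y : Finset X) (t : ℝ) (x : X → ℝ) : X → ℝ :=
  fun i => if i ∈ Y then (if t < x i then 1 else 0) else x i

section roundOn

variable {Y : Finset X} {x : X → ℝ}

theorem update_mem_Icc (hx : ∀ i, x i ∈ Set.Icc (0 : ℝ) 1) (a : X) {c : ℝ}
    (hc : c ∈ Set.Icc (0 : ℝ) 1) (i : X) : update x a c i ∈ Set.Icc (0 : ℝ) 1 :=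
  (forall_update_iff x fun _ z => z ∈ Set.Icc (0 : ℝ) 1).2 ⟨hc, fun j _ => hx j⟩ i

theorem roundOn_mem_Icc (hx : ∀ i, x i ∈ Set.Icc (0 : ℝ) 1) (t : ℝ) (i : X) :
    roundOn Y t x i ∈ Set.Icc (0 : ℝ) 1 := by
  unfold roundOn
  split_ifs
  exacts [⟨zero_le_one, le_rfl⟩, ⟨le_rfl, zero_le_one⟩, hx i]

theorem antitone_roundOn (Y : Finset X) (x : X → ℝ) : Antitone fun t => roundOn Y t x := by
  intro t t' htt' i
  simp only [roundOn]
  split_ifs with _ h' h <;> first | exact absurd (htt'.trans_lt h') h | rfl | norm_num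

theorem measurable_roundOn (Y : Finset X) (x : X → ℝ) : Measurable fun t => roundOn Y t x := by
  refine measurable_pi_lambda _ fun i => ?_
  unfold roundOn
  split_ifs
  exacts [Measurable.ite measurableSet_Iio measurable_const measurable_const, measurable_const]

theorem roundOn_update {a : X} (ha : a ∈ Y) (t c : ℝ) :
    roundOn Y t (update x a c) = update (roundOn Y t x) a (if t < c then 1 else 0) := by
  ext i
  rcases eq_or_ne i a with rfl | hia
  · simp [roundOn, ha]
  · simp [roundOn, hia]

theorem roundOn_eq_self (hx : ∀ i ∈ Y, x i = 0 ∨ x i = 1) {t : ℝ} (ht : t ∈ Set.Ico (0 : ℝ) 1) :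
    roundOn Y t x = x := by
  ext i
  unfold roundOn
  split_ifs with hi h
  · rcases hx i hi with h0 | h1
    · linarith [ht.1]
    · exact h1.symm
  · rcases hx i hi with h0 | h1
    · exact h0.symm
    · exact absurd (h1 ▸ ht.2) h
  · rfl

end roundOn

section threshold

variable [Fintype X] {f : Finset X → ℝ} {Y : Finset X} {x : X → ℝ}

theorem mExt_roundOn_eq_add_indicator {a : X} (ha : a ∈ Y) (t : ℝ) :
    mExt f (roundOn Y t x) = mExt f (update (roundOn Y t x) a 0)
      + (Set.Iio (x a)).indicator (fun t =>
          mExt f (update (roundOn Y t x) a 1) - mExt f (update (roundOn Y t x) a 0)) t := by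
  have hva : roundOn Y t x = update (roundOn Y t x) a (if t < x a then 1 else 0) :=
    (update_eq_self_iff.2 (by simp [roundOn, ha])).symm
  by_cases ht : t < x a
  · conv_lhs => rw [hva, if_pos ht]
    rw [Set.indicator_of_mem (Set.mem_Iio.2 ht)]
    ring
  · conv_lhs => rw [hva, if_neg ht]
    rw [Set.indicator_of_notMem (mt Set.mem_Iio.1 ht), add_zero]

theorem Submodular.setIntegral_mExt_roundOn_le_of_update (hf : Submodular f) {a : X}
    (ha : a ∈ Y) (hx : ∀ i, x i ∈ Set.Icc (0 : ℝ) 1)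
    (h₀ : ∫ t in Set.Ico 0 1, mExt f (roundOn Y t (update x a 0)) ≤ mExt f (update x a 0))
    (h₁ : ∫ t in Set.Ico 0 1, mExt f (roundOn Y t (update x a 1)) ≤ mExt f (update x a 1)) :
    ∫ t in Set.Ico 0 1, mExt f (roundOn Y t x) ≤ mExt f x := by
  set v : ℝ → X → ℝ := fun t => roundOn Y t x
  have hv : ∀ t i, v t i ∈ Set.Icc (0 : ℝ) 1 := roundOn_mem_Icc hx
  have hint : ∀ c ∈ Set.Icc (0 : ℝ) 1,
      IntegrableOn (fun t => mExt f (update (v t) a c)) (Set.Ico 0 1) := fun c hc =>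
    integrable_mExt_comp f (measurable_update_left.comp (measurable_roundOn Y x))
      fun t => update_mem_Icc (hv t) a hc
  have hint₀ := hint 0 ⟨le_rfl, zero_le_one⟩
  have hint₁ := hint 1 ⟨zero_le_one, le_rfl⟩
  set m : ℝ → ℝ := fun t => mExt f (update (v t) a 1) - mExt f (update (v t) a 0)
  have hm : Monotone m := fun t t' htt' =>
    hf.mExt_marginal_antitone a (hv t') (hv t) (antitone_roundOn Y x htt')
  have hv₀ : ∫ t in Set.Ico 0 1, mExt f (update (v t) a 0) ≤ mExt f (update x a 0) := by
    refine le_of_eq_of_le (setIntegral_congr_fun measurableSet_Ico fun t ht => ?_) h₀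
    simp only [v, roundOn_update ha, if_neg (not_lt.2 ht.1)]
  have hv₁ : ∫ t in Set.Ico 0 1, mExt f (update (v t) a 1) ≤ mExt f (update x a 1) := by
    refine le_of_eq_of_le (setIntegral_congr_fun measurableSet_Ico fun t ht => ?_) h₁
    simp only [v, roundOn_update ha, if_pos ht.2]
  calc ∫ t in Set.Ico 0 1, mExt f (v t)
      = (∫ t in Set.Ico 0 1, mExt f (update (v t) a 0))
          + ∫ t in Set.Ico 0 1, (Set.Iio (x a)).indicator m t := by
        simp only [v, m, mExt_roundOn_eq_add_indicator ha]
        exact integral_add hint₀ ((hint₁.sub hint₀).indicator measurableSet_Iio)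
    _ ≤ (∫ t in Set.Ico 0 1, mExt f (update (v t) a 0)) + x a * ∫ t in Set.Ico 0 1, m t :=
        by gcongr; exact hm.setIntegral_indicator_Iio_le (hx a)
    _ = (1 - x a) * (∫ t in Set.Ico 0 1, mExt f (update (v t) a 0))
          + x a * ∫ t in Set.Ico 0 1, mExt f (update (v t) a 1) := by
        rw [integral_sub hint₁ hint₀]
        ring
    _ ≤ (1 - x a) * mExt f (update x a 0) + x a * mExt f (update x a 1) := by
        gcongr
        exacts [sub_nonneg.2 (hx a).2, (hx a).1]
    _ = mExt f x := (mExt_eq_affine f x a).symm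

theorem Submodular.setIntegral_mExt_roundOn_le (hf : Submodular f) (Y : Finset X)
    (hx : ∀ i, x i ∈ Set.Icc (0 : ℝ) 1) :
    ∫ t in Set.Icc 0 1, mExt f (roundOn Y t x) ≤ mExt f x := by
  -- On `[0, 1)`, rounding fixes coordinates equal to `0` or `1`; at `t = 1` it would not.
  rw [← setIntegral_congr_set Ico_ae_eq_Icc]
  suffices h : ∀ D ⊆ Y, ∀ x : X → ℝ, (∀ i, x i ∈ Set.Icc (0 : ℝ) 1) →
      (∀ i ∈ Y \ D, x i = 0 ∨ x i = 1) → ∫ t in Set.Ico 0 1, mExt f (roundOn Y t x) ≤ mExt f x from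
    h Y subset_rfl x hx (by simp)
  intro D hD
  induction D using Finset.induction_on with
  | empty =>
    intro x _ hbin
    rw [setIntegral_congr_fun measurableSet_Ico fun t ht =>
      congrArg (mExt f) (roundOn_eq_self (by simpa using hbin) ht)]
    simp
  | @insert a D ha ih =>
    intro x hx hbin
    have hbin' : ∀ c : ℝ, (c = 0 ∨ c = 1) →
        ∀ i ∈ Y \ D, update x a c i = 0 ∨ update x a c i = 1 := by
      intro c hc i hi
      rcases eq_or_ne i a with rfl | hia
      · simpa using hc
      · rw [update_of_ne hia]
        exact hbin i (mem_sdiff.2 ⟨(mem_sdiff.1 hi).1, by simp [hia, (mem_sdiff.1 hi).2]⟩)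
    have hDY := (subset_insert a D).trans hD
    exact hf.setIntegral_mExt_roundOn_le_of_update (hD (mem_insert_self a D)) hx
      (ih hDY _ (update_mem_Icc hx a ⟨le_rfl, zero_le_one⟩) (hbin' 0 (.inl rfl)))
      (ih hDY _ (update_mem_Icc hx a ⟨zero_le_one, le_rfl⟩) (hbin' 1 (.inr rfl)))

end threshold

theorem roundOn_roundOn_eq_indicator [Fintype X] {X₁ X₂ : Finset X}
    (hunion : X₁ ∪ X₂ = univ) (hdisj : Disjoint X₁ X₂) (t₁ t₂ : ℝ) (x : X → ℝ) :
    roundOn X₂ t₂ (roundOn X₁ t₁ x) = fun i =>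
      if i ∈ ((univ.filter fun i => t₁ < x i) ∩ X₁) ∪ ((univ.filter fun i => t₂ < x i) ∩ X₂)
      then 1 else 0 := by
  ext i
  rcases mem_union.1 (hunion ▸ mem_univ i) with hi | hi
  · have hi' : i ∉ X₂ := disjoint_left.1 hdisj hi
    by_cases ht : t₁ < x i <;> simp [roundOn, hi, hi', ht]
  · have hi' : i ∉ X₁ := disjoint_right.1 hdisj hi
    by_cases ht : t₂ < x i <;> simp [roundOn, hi, hi', ht]

end TwoThreshold

/-- Two-threshold lemma: for a partition `X = X₁ ∪ X₂` and independent uniform thresholds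
`λ₁, λ₂ ∈ [0,1]`, the multilinear extension dominates the expected value of `f` on
`(T_{>λ₁}(x) ∩ X₁) ∪ (T_{>λ₂}(x) ∩ X₂)`. -/
theorem two_threshold_lemma
    {X : Type*} [Fintype X] [DecidableEq X] (f : Finset X → ℝ)
    (hf0 : ∀ S, 0 ≤ f S) (hf : Submodular f)
    (X₁ X₂ : Finset X) (hunion : X₁ ∪ X₂ = Finset.univ) (hdisj : Disjoint X₁ X₂)
    (x : X → ℝ) (hx : ∀ i, x i ∈ Set.Icc (0 : ℝ) 1) :
    (∫ t₁ in Set.Icc (0 : ℝ) 1, ∫ t₂ in Set.Icc (0 : ℝ) 1,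
        f (((Finset.univ.filter fun i => t₁ < x i) ∩ X₁) ∪
           ((Finset.univ.filter fun i => t₂ < x i) ∩ X₂))) ≤ mExt f x := by
  have hinner : ∀ t₁, (∫ t₂ in Set.Icc (0 : ℝ) 1,
      f (((Finset.univ.filter fun i => t₁ < x i) ∩ X₁) ∪
          ((Finset.univ.filter fun i => t₂ < x i) ∩ X₂)))
        ≤ mExt f (roundOn X₁ t₁ x) := fun t₁ => by
    have h := hf.setIntegral_mExt_roundOn_le X₂ (roundOn_mem_Icc (Y := X₁) hx t₁)
    simpa only [roundOn_roundOn_eq_indicator hunion hdisj, mExt_indicator] using h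
  calc _ ≤ ∫ t₁ in Set.Icc (0 : ℝ) 1, mExt f (roundOn X₁ t₁ x) :=
        integral_mono_of_nonneg (.of_forall fun _ => integral_nonneg fun _ => hf0 _)
          (integrable_mExt_comp f (measurable_roundOn X₁ x) (roundOn_mem_Icc hx))
          (.of_forall hinner)
    _ ≤ mExt f x := hf.setIntegral_mExt_roundOn_le X₁ hx
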